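/- arXiv:2405.08422 — 2 statements merged into one kernel-verified Lean document; each statement's English description precedes it below -/
import Mathlib

section
/- The class 2Eq_fin of all finite nonempty models of two equivalences is Σ1-interpretable with parameters (a single parameter variable) in the class LEq_fin of all finite nonempty models of a linear order and an equivalence. -/
open FirstOrder FirstOrder.Language

/-- A bounded formula is Σ₁ if it consists of a (possibly empty) block of existential
quantifiers followed by a quantifier-free formula. -/
inductive IsSigma1 {L : Language} {α : Type*} : {n : ℕ} → L.BoundedFormula α n → Prop
  | of_isQF {n : ℕ} {φ : L.BoundedFormula α n} : φ.IsQF → IsSigma1 φ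
  | ex {n : ℕ} {φ : L.BoundedFormula α (n + 1)} : IsSigma1 φ → IsSigma1 φ.ex

/-- `K1` (a class of `σ1`-structures) is Σ₁-interpretable with parameters (indexed by `γ`)
in `K2` (a class of `σ2`-structures). -/
def Sigma1InterpretableWithParams (σ1 σ2 : Language)
    (K1 : (A : Type) → σ1.Structure A → Prop)
    (K2 : (B : Type) → σ2.Structure B → Prop) (γ : Type) : Prop :=
  ∃ (ΦU : σ2.Formula (Fin 1 ⊕ γ))
    (ΦR ΦnR : (n : ℕ) → σ1.Relations n → σ2.Formula (Fin n ⊕ γ)),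
    IsSigma1 ΦU ∧
    (∀ (n : ℕ) (R : σ1.Relations n), IsSigma1 (ΦR n R)) ∧
    (∀ (n : ℕ) (R : σ1.Relations n), IsSigma1 (ΦnR n R)) ∧
    ∀ (A : Type) (SA : σ1.Structure A), K1 A SA →
      ∃ (B : Type) (SB : σ2.Structure B) (p : γ → B),
        K2 B SB ∧
        (letI := SB
         -- (1) the interpreted universe B' = {b | 𝔅 ⊨ ΦU(b, p̄)} is nonempty
         (∃ b : B, ΦU.Realize (Sum.elim (fun _ => b) p)) ∧
         -- (2) on B', the formula ΦnR defines exactly the complement of ΦR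
         (∀ (n : ℕ) (R : σ1.Relations n) (b : Fin n → B),
            (∀ i, ΦU.Realize (Sum.elim (fun _ => b i) p)) →
            ((ΦnR n R).Realize (Sum.elim b p) ↔ ¬ (ΦR n R).Realize (Sum.elim b p))) ∧
         -- (3) 𝔄 is isomorphic to the structure induced on B' by the formulas ΦR
         (∃ g : A → B,
            Function.Injective g ∧
            (∀ b : B, ΦU.Realize (Sum.elim (fun _ => b) p) ↔ b ∈ Set.range g) ∧
            (∀ (n : ℕ) (R : σ1.Relations n) (a : Fin n → A),
              SA.RelMap R a ↔ (ΦR n R).Realize (Sum.elim (g ∘ a) p))))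

/-- Relation symbols of the language of two equivalences: two binary symbols P and Q. -/
inductive EqRel2 : ℕ → Type
  | P : EqRel2 2
  | Q : EqRel2 2

/-- The language {P², Q²} of two equivalences (purely relational). -/
def σE : Language := ⟨fun _ => Empty, EqRel2⟩

/-- Relation symbols of the language of a linear order and an equivalence:
two binary symbols < and ≈. -/
inductive LERel : ℕ → Type
  | lt : LERel 2
  | equiv : LERel 2

/-- The language {<², ≈²} of a linear order and an equivalence (purely relational). -/
def σL : Language := ⟨fun _ => Empty, LERel⟩

/-- The class 2Eq_fin of finite nonempty models of two equivalences. -/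
def TwoEqFin (A : Type) (SA : σE.Structure A) : Prop :=
  Finite A ∧ Nonempty A ∧
  Equivalence (fun x y : A => SA.RelMap EqRel2.P ![x, y]) ∧
  Equivalence (fun x y : A => SA.RelMap EqRel2.Q ![x, y])

/-- The class LEq_fin of finite nonempty models of a strict linear order and an equivalence. -/
def LEqFin (B : Type) (SB : σL.Structure B) : Prop :=
  Finite B ∧ Nonempty B ∧
  (∀ x : B, ¬ SB.RelMap LERel.lt ![x, x]) ∧
  (∀ x y z : B, SB.RelMap LERel.lt ![x, y] → SB.RelMap LERel.lt ![y, z] →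
    SB.RelMap LERel.lt ![x, z]) ∧
  (∀ x y : B, SB.RelMap LERel.lt ![x, y] ∨ x = y ∨ SB.RelMap LERel.lt ![y, x]) ∧
  Equivalence (fun x y : B => SB.RelMap LERel.equiv ![x, y])

namespace S1I

open FirstOrder FirstOrder.Language

/-! ### Generic Σ₁ facts -/

theorem isSigma1_exs {L : Language} {α : Type*} {n : ℕ} {φ : L.BoundedFormula α n}
    (h : IsSigma1 φ) : IsSigma1 φ.exs := by
  induction n with
  | zero => exact h
  | succ n ih => exact ih (IsSigma1.ex h)

/-! ### The formulas -/

/-- atomic `t₁ < t₂` -/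
def flt {α : Type} {k : ℕ} (t₁ t₂ : σL.Term (α ⊕ Fin k)) : σL.BoundedFormula α k :=
  Relations.boundedFormula₂ LERel.lt t₁ t₂

/-- atomic `t₁ ≈ t₂` -/
def feq {α : Type} {k : ℕ} (t₁ t₂ : σL.Term (α ⊕ Fin k)) : σL.BoundedFormula α k :=
  Relations.boundedFormula₂ LERel.equiv t₁ t₂

theorem flt_isQF {α : Type} {k : ℕ} (t₁ t₂ : σL.Term (α ⊕ Fin k)) : (flt t₁ t₂).IsQF :=
  (BoundedFormula.IsAtomic.rel _ _).isQF

theorem feq_isQF {α : Type} {k : ℕ} (t₁ t₂ : σL.Term (α ⊕ Fin k)) : (feq t₁ t₂).IsQF :=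
  (BoundedFormula.IsAtomic.rel _ _).isQF

def vX {k : ℕ} : σL.Term ((Fin 2 ⊕ Fin 1) ⊕ Fin k) := Term.var (Sum.inl (Sum.inl 0))
def vY {k : ℕ} : σL.Term ((Fin 2 ⊕ Fin 1) ⊕ Fin k) := Term.var (Sum.inl (Sum.inl 1))
def vp {k : ℕ} : σL.Term ((Fin 2 ⊕ Fin 1) ⊕ Fin k) := Term.var (Sum.inl (Sum.inr 0))
def bv {k : ℕ} (i : Fin k) : σL.Term ((Fin 2 ⊕ Fin 1) ⊕ Fin k) := Term.var (Sum.inr i)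

/-- `r` is the P-representative of `t`, via ghost `g`, pair-partner `v`, and the
second separator `q`. -/
def repPcore {k : ℕ} (t r g v q : σL.Term ((Fin 2 ⊕ Fin 1) ⊕ Fin k)) :
    σL.BoundedFormula (Fin 2 ⊕ Fin 1) k :=
  feq q vp ⊓ (Term.bdEqual q vp).not ⊓ feq t g ⊓ flt vp g ⊓ flt g q ⊓
    feq r v ⊓ flt vp r ⊓ flt r g ⊓ flt g v ⊓ flt v q

def repQcore {k : ℕ} (t r g v q : σL.Term ((Fin 2 ⊕ Fin 1) ⊕ Fin k)) :
    σL.BoundedFormula (Fin 2 ⊕ Fin 1) k :=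
  feq q vp ⊓ (Term.bdEqual q vp).not ⊓ feq t g ⊓ flt q g ⊓
    feq r v ⊓ flt q r ⊓ flt r g ⊓ flt g v

theorem repPcore_isQF {k : ℕ} (t r g v q : σL.Term ((Fin 2 ⊕ Fin 1) ⊕ Fin k)) :
    (repPcore t r g v q).IsQF := by
  unfold repPcore
  repeat' apply BoundedFormula.IsQF.inf
  all_goals first
    | exact flt_isQF _ _
    | exact feq_isQF _ _
    | exact (BoundedFormula.IsAtomic.equal _ _).isQF.not

theorem repQcore_isQF {k : ℕ} (t r g v q : σL.Term ((Fin 2 ⊕ Fin 1) ⊕ Fin k)) :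
    (repQcore t r g v q).IsQF := by
  unfold repQcore
  repeat' apply BoundedFormula.IsQF.inf
  all_goals first
    | exact flt_isQF _ _
    | exact feq_isQF _ _
    | exact (BoundedFormula.IsAtomic.equal _ _).isQF.not

def phiU : σL.Formula (Fin 1 ⊕ Fin 1) :=
  Relations.boundedFormula₂ LERel.lt (Term.var (Sum.inl (Sum.inl 0)))
    (Term.var (Sum.inl (Sum.inr 0)))

def phiP : σL.Formula (Fin 2 ⊕ Fin 1) :=
  ((repPcore vX (bv 0) (bv 1) (bv 2) (bv 3) ⊓
    repPcore vY (bv 0) (bv 4) (bv 5) (bv 6) : σL.BoundedFormula _ 7)).exs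

def phinP : σL.Formula (Fin 2 ⊕ Fin 1) :=
  ((repPcore vX (bv 0) (bv 2) (bv 3) (bv 4) ⊓
    repPcore vY (bv 1) (bv 5) (bv 6) (bv 7) ⊓
    (Term.bdEqual (bv 0) (bv 1)).not : σL.BoundedFormula _ 8)).exs

def phiQ : σL.Formula (Fin 2 ⊕ Fin 1) :=
  ((repQcore vX (bv 0) (bv 1) (bv 2) (bv 3) ⊓
    repQcore vY (bv 0) (bv 4) (bv 5) (bv 6) : σL.BoundedFormula _ 7)).exs

def phinQ : σL.Formula (Fin 2 ⊕ Fin 1) :=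
  ((repQcore vX (bv 0) (bv 2) (bv 3) (bv 4) ⊓
    repQcore vY (bv 1) (bv 5) (bv 6) (bv 7) ⊓
    (Term.bdEqual (bv 0) (bv 1)).not : σL.BoundedFormula _ 8)).exs

theorem phiU_isSigma1 : IsSigma1 phiU := IsSigma1.of_isQF ((BoundedFormula.IsAtomic.rel _ _).isQF)
theorem phiP_isSigma1 : IsSigma1 phiP :=
  isSigma1_exs (IsSigma1.of_isQF ((repPcore_isQF _ _ _ _ _).inf (repPcore_isQF _ _ _ _ _)))
theorem phinP_isSigma1 : IsSigma1 phinP :=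
  isSigma1_exs (IsSigma1.of_isQF (((repPcore_isQF _ _ _ _ _).inf (repPcore_isQF _ _ _ _ _)).inf
    (BoundedFormula.IsAtomic.equal _ _).isQF.not))
theorem phiQ_isSigma1 : IsSigma1 phiQ :=
  isSigma1_exs (IsSigma1.of_isQF ((repQcore_isQF _ _ _ _ _).inf (repQcore_isQF _ _ _ _ _)))
theorem phinQ_isSigma1 : IsSigma1 phinQ :=
  isSigma1_exs (IsSigma1.of_isQF (((repQcore_isQF _ _ _ _ _).inf (repQcore_isQF _ _ _ _ _)).inf
    (BoundedFormula.IsAtomic.equal _ _).isQF.not))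

def phiR : (n : ℕ) → σE.Relations n → σL.Formula (Fin n ⊕ Fin 1)
  | _, EqRel2.P => phiP
  | _, EqRel2.Q => phiQ

def phinR : (n : ℕ) → σE.Relations n → σL.Formula (Fin n ⊕ Fin 1)
  | _, EqRel2.P => phinP
  | _, EqRel2.Q => phinQ

/-! ### The model -/

inductive BB (A CP CQ : Type) : Type
  | base : A → BB A CP CQ
  | pt : BB A CP CQ
  | lamP : CP → BB A CP CQ
  | ghP : A → BB A CP CQ
  | rhoP : CP → BB A CP CQ
  | qt : BB A CP CQ
  | muQ : CQ → BB A CP CQ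
  | ghQ : A → BB A CP CQ
  | nuQ : CQ → BB A CP CQ

namespace BB

variable {A CP CQ : Type}

def toSum : BB A CP CQ → ((A ⊕ A) ⊕ A) ⊕ ((CP ⊕ CP) ⊕ (CQ ⊕ CQ)) ⊕ Bool
  | base a => .inl (.inl (.inl a))
  | ghP a => .inl (.inl (.inr a))
  | ghQ a => .inl (.inr a)
  | lamP c => .inr (.inl (.inl (.inl c)))
  | rhoP c => .inr (.inl (.inl (.inr c)))
  | muQ c => .inr (.inl (.inr (.inl c)))
  | nuQ c => .inr (.inl (.inr (.inr c)))
  | pt => .inr (.inr true)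
  | qt => .inr (.inr false)

theorem toSum_injective : Function.Injective (toSum (A := A) (CP := CP) (CQ := CQ)) := by
  intro x y h
  cases x <;> cases y <;> simp_all [toSum]

instance [Finite A] [Finite CP] [Finite CQ] : Finite (BB A CP CQ) :=
  Finite.of_injective _ toSum_injective

end BB

/-- bundled enumeration data -/
structure Enum (A CP CQ : Type) where
  eA : A → ℕ
  nA : ℕ
  eP : CP → ℕ
  eQ : CQ → ℕ
  cP : A → CP
  cQ : A → CQ
  hA : ∀ a, eA a < nA
  injA : Function.Injective eA
  injP : Function.Injective eP
  injQ : Function.Injective eQ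

variable {A CP CQ : Type}

def lt3 (x y : ℕ × ℕ × ℕ) : Prop :=
  x.1 < y.1 ∨ (x.1 = y.1 ∧ (x.2.1 < y.2.1 ∨ (x.2.1 = y.2.1 ∧ x.2.2 < y.2.2)))

def key (E : Enum A CP CQ) : BB A CP CQ → ℕ × ℕ × ℕ
  | .base a => (0, E.eA a, 0)
  | .pt => (1, 0, 0)
  | .lamP c => (2, E.eP c, 0)
  | .ghP a => (2, E.eP (E.cP a), E.eA a + 1)
  | .rhoP c => (2, E.eP c, E.nA + 1)
  | .qt => (3, 0, 0)
  | .muQ c => (4, E.eQ c, 0)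
  | .ghQ a => (4, E.eQ (E.cQ a), E.eA a + 1)
  | .nuQ c => (4, E.eQ c, E.nA + 1)

def ltB (E : Enum A CP CQ) (x y : BB A CP CQ) : Prop := lt3 (key E x) (key E y)

def classId : BB A CP CQ → Unit ⊕ (A ⊕ (CP ⊕ CQ))
  | .base a => .inr (.inl a)
  | .ghP a => .inr (.inl a)
  | .ghQ a => .inr (.inl a)
  | .pt => .inl ()
  | .qt => .inl ()
  | .lamP c => .inr (.inr (.inl c))
  | .rhoP c => .inr (.inr (.inl c))
  | .muQ c => .inr (.inr (.inr c))
  | .nuQ c => .inr (.inr (.inr c))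

def eqB (x y : BB A CP CQ) : Prop := classId x = classId y

def relI (E : Enum A CP CQ) : ∀ {n : ℕ}, LERel n → (Fin n → BB A CP CQ) → Prop
  | _, .lt, xs => ltB E (xs 0) (xs 1)
  | _, .equiv, xs => eqB (xs 0) (xs 1)

def str (E : Enum A CP CQ) : σL.Structure (BB A CP CQ) where
  funMap := fun f _ => Empty.elim f
  RelMap := fun r xs => relI E r xs

@[simp] theorem relMap_lt (E : Enum A CP CQ) (xs : Fin 2 → BB A CP CQ) :
    Structure.RelMap (self := str E) LERel.lt xs = ltB E (xs 0) (xs 1) := rfl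

@[simp] theorem relMap_eqv (E : Enum A CP CQ) (xs : Fin 2 → BB A CP CQ) :
    Structure.RelMap (self := str E) LERel.equiv xs = eqB (xs 0) (xs 1) := rfl

/-! ### order and equivalence facts -/

theorem keyInj (E : Enum A CP CQ) : Function.Injective (key E) := by
  intro x y h
  cases x <;> cases y <;> simp only [key, Prod.mk.injEq] at h <;>
    first
      | rfl
      | (obtain ⟨h1, h2, h3⟩ := h
         first
           | omega
           | exact congrArg _ (E.injA (by omega))
           | exact congrArg _ (E.injP h2)
           | exact congrArg _ (E.injQ h2)
           | (rename_i u v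
              first
                | (have := E.hA u; omega)
                | (have := E.hA v; omega)))

theorem ltB_irrefl (E : Enum A CP CQ) (x : BB A CP CQ) : ¬ ltB E x x := by
  unfold ltB lt3; omega

theorem ltB_trans (E : Enum A CP CQ) (x y z : BB A CP CQ) :
    ltB E x y → ltB E y z → ltB E x z := by
  unfold ltB lt3; omega

theorem ltB_total (E : Enum A CP CQ) (x y : BB A CP CQ) :
    ltB E x y ∨ x = y ∨ ltB E y x := by
  have h : lt3 (key E x) (key E y) ∨ key E x = key E y ∨ lt3 (key E y) (key E x) := by
    unfold lt3
    rcases key E x with ⟨a, b, c⟩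
    rcases key E y with ⟨d, e, f⟩
    simp only [Prod.mk.injEq]
    omega
  rcases h with h | h | h
  · exact Or.inl h
  · exact Or.inr (Or.inl (keyInj E h))
  · exact Or.inr (Or.inr h)

theorem eqB_equiv : Equivalence (eqB (A := A) (CP := CP) (CQ := CQ)) :=
  ⟨fun _ => rfl, Eq.symm, Eq.trans⟩

/-! ### pinning lemmas -/

theorem q_pin {q : BB A CP CQ} (h1 : eqB q .pt) (h2 : q ≠ .pt) : q = .qt := by
  cases q <;> simp_all [eqB, classId]

theorem ltB_pt_iff (E : Enum A CP CQ) (x : BB A CP CQ) :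
    ltB E x .pt ↔ ∃ a, x = .base a := by
  cases x <;> simp [ltB, key, lt3]

theorem g_pinP (E : Enum A CP CQ) {a : A} {g : BB A CP CQ}
    (h1 : eqB (.base a) g) (h2 : ltB E .pt g) (h3 : ltB E g .qt) : g = .ghP a := by
  cases g <;> simp_all [eqB, classId, ltB, key, lt3] <;> omega

theorem g_pinQ (E : Enum A CP CQ) {a : A} {g : BB A CP CQ}
    (h1 : eqB (.base a) g) (h2 : ltB E .qt g) : g = .ghQ a := by
  cases g <;> simp_all [eqB, classId, ltB, key, lt3] <;> omega

theorem rv_pinP (E : Enum A CP CQ) {a : A} {r v : BB A CP CQ}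
    (h1 : eqB r v) (h2 : ltB E .pt r) (h3 : ltB E r (.ghP a))
    (h4 : ltB E (.ghP a) v) (h5 : ltB E v .qt) :
    r = .lamP (E.cP a) ∧ v = .rhoP (E.cP a) := by
  cases r <;> cases v <;>
    try (exfalso; simp_all [eqB, classId, ltB, key, lt3] <;> omega)
  case lamP.rhoP c c' =>
    simp only [eqB, classId, Sum.inr.injEq, Sum.inl.injEq] at h1
    subst h1
    simp only [ltB, key, lt3] at h3 h4
    have hc : E.eP c = E.eP (E.cP a) := by omega
    have hc' := E.injP hc
    subst hc'
    exact ⟨rfl, rfl⟩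

theorem rv_pinQ (E : Enum A CP CQ) {a : A} {r v : BB A CP CQ}
    (h1 : eqB r v) (h2 : ltB E .qt r) (h3 : ltB E r (.ghQ a))
    (h4 : ltB E (.ghQ a) v) :
    r = .muQ (E.cQ a) ∧ v = .nuQ (E.cQ a) := by
  cases r <;> cases v <;>
    try (exfalso; simp_all [eqB, classId, ltB, key, lt3] <;> omega)
  case muQ.nuQ c c' =>
    simp only [eqB, classId, Sum.inr.injEq] at h1
    subst h1
    simp only [ltB, key, lt3] at h3 h4
    have hc : E.eQ c = E.eQ (E.cQ a) := by omega
    have hc' := E.injQ hc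
    subst hc'
    exact ⟨rfl, rfl⟩


/-! ### semantic cores -/

def RepP (E : Enum A CP CQ) (p t r g v q : BB A CP CQ) : Prop :=
  eqB q p ∧ ¬ q = p ∧ eqB t g ∧ ltB E p g ∧ ltB E g q ∧
    eqB r v ∧ ltB E p r ∧ ltB E r g ∧ ltB E g v ∧ ltB E v q

def RepQ (E : Enum A CP CQ) (p t r g v q : BB A CP CQ) : Prop :=
  eqB q p ∧ ¬ q = p ∧ eqB t g ∧ ltB E q g ∧
    eqB r v ∧ ltB E q r ∧ ltB E r g ∧ ltB E g v

theorem RepP_iff (E : Enum A CP CQ) (a : A) (r g v q : BB A CP CQ) :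
    RepP E BB.pt (.base a) r g v q ↔
      (r = .lamP (E.cP a) ∧ g = .ghP a ∧ v = .rhoP (E.cP a) ∧ q = .qt) := by
  constructor
  · rintro ⟨h1, h2, h3, h4, h5, h6, h7, h8, h9, h10⟩
    have hq := q_pin h1 h2; subst hq
    have hg := g_pinP E h3 h4 h5; subst hg
    obtain ⟨hr, hv⟩ := rv_pinP E h6 h7 h8 h9 h10
    exact ⟨hr, rfl, hv, rfl⟩
  · rintro ⟨rfl, rfl, rfl, rfl⟩
    have h := E.hA a
    refine ⟨rfl, by simp, rfl, ?_, ?_, rfl, ?_, ?_, ?_, ?_⟩ <;>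
      (simp [ltB, key, lt3]; try omega)

theorem RepQ_iff (E : Enum A CP CQ) (a : A) (r g v q : BB A CP CQ) :
    RepQ E BB.pt (.base a) r g v q ↔
      (r = .muQ (E.cQ a) ∧ g = .ghQ a ∧ v = .nuQ (E.cQ a) ∧ q = .qt) := by
  constructor
  · rintro ⟨h1, h2, h3, h4, h5, h6, h7, h8⟩
    have hq := q_pin h1 h2; subst hq
    have hg := g_pinQ E h3 h4; subst hg
    obtain ⟨hr, hv⟩ := rv_pinQ E h5 h6 h7 h8
    exact ⟨hr, rfl, hv, rfl⟩
  · rintro ⟨rfl, rfl, rfl, rfl⟩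
    have h := E.hA a
    refine ⟨rfl, by simp, rfl, ?_, rfl, ?_, ?_, ?_⟩ <;>
      (simp [ltB, key, lt3]; try omega)

end S1I



/-- 2Eq_fin is Σ₁-interpretable with parameters (a single parameter variable) in LEq_fin. -/
theorem twoEqFin_sigma1_interpretable_with_params_in_lEqFin :
    Sigma1InterpretableWithParams σE σL TwoEqFin LEqFin (Fin 1) := by
  classical
  refine ⟨S1I.phiU, S1I.phiR, S1I.phinR, S1I.phiU_isSigma1, ?_, ?_, ?_⟩
  · intro n R
    cases R
    · exact S1I.phiP_isSigma1
    · exact S1I.phiQ_isSigma1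
  · intro n R
    cases R
    · exact S1I.phinP_isSigma1
    · exact S1I.phinQ_isSigma1
  intro A SA hA
  obtain ⟨hfin, hne, hPe, hQe⟩ := hA
  haveI := hfin
  haveI := Fintype.ofFinite A
  let sP : Setoid A := ⟨fun x y => SA.RelMap EqRel2.P ![x, y], hPe⟩
  let sQ : Setoid A := ⟨fun x y => SA.RelMap EqRel2.Q ![x, y], hQe⟩
  haveI : Finite (Quotient sP) := Quotient.finite _
  haveI : Finite (Quotient sQ) := Quotient.finite _
  haveI := Fintype.ofFinite (Quotient sP)
  haveI := Fintype.ofFinite (Quotient sQ)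
  let E : S1I.Enum A (Quotient sP) (Quotient sQ) :=
    { eA := fun a => (Fintype.equivFin A a : ℕ)
      nA := Fintype.card A
      eP := fun c => (Fintype.equivFin (Quotient sP) c : ℕ)
      eQ := fun c => (Fintype.equivFin (Quotient sQ) c : ℕ)
      cP := Quotient.mk sP
      cQ := Quotient.mk sQ
      hA := fun a => (Fintype.equivFin A a).isLt
      injA := fun a b h => (Fintype.equivFin A).injective (Fin.val_injective h)
      injP := fun a b h => (Fintype.equivFin (Quotient sP)).injective (Fin.val_injective h)
      injQ := fun a b h => (Fintype.equivFin (Quotient sQ)).injective (Fin.val_injective h) }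
  set B := S1I.BB A (Quotient sP) (Quotient sQ) with hB
  refine ⟨B, S1I.str E, fun _ => S1I.BB.pt, ?_, ?_⟩
  · -- LEqFin
    exact ⟨inferInstance, ⟨S1I.BB.pt⟩, fun x => S1I.ltB_irrefl E x,
      fun x y z => S1I.ltB_trans E x y z, fun x y => S1I.ltB_total E x y, S1I.eqB_equiv⟩
  letI : σL.Structure B := S1I.str E
  have hRl : ∀ xs : Fin 2 → B, @Structure.RelMap σL B _ 2 LERel.lt xs = S1I.ltB E (xs 0) (xs 1) :=
    fun _ => rfl
  have hRe : ∀ xs : Fin 2 → B, @Structure.RelMap σL B _ 2 LERel.equiv xs = S1I.eqB (xs 0) (xs 1) :=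
    fun _ => rfl
  -- realize lemma for the cores
  have hcoreP : ∀ {k : ℕ} (t r g v q : σL.Term ((Fin 2 ⊕ Fin 1) ⊕ Fin k))
      (w : Fin 2 ⊕ Fin 1 → B) (xs : Fin k → B),
      (S1I.repPcore t r g v q).Realize w xs ↔
        S1I.RepP E (w (Sum.inr 0)) (t.realize (Sum.elim w xs)) (r.realize (Sum.elim w xs))
          (g.realize (Sum.elim w xs)) (v.realize (Sum.elim w xs))
          (q.realize (Sum.elim w xs)) := by
    intros
    simp [S1I.repPcore, S1I.RepP, S1I.flt, S1I.feq, S1I.vp, hRl, hRe, and_assoc]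
    simp only [Relations.boundedFormula₂, Relations.boundedFormula, BoundedFormula.Realize]
    simp [hRl, hRe]
  have hcoreQ : ∀ {k : ℕ} (t r g v q : σL.Term ((Fin 2 ⊕ Fin 1) ⊕ Fin k))
      (w : Fin 2 ⊕ Fin 1 → B) (xs : Fin k → B),
      (S1I.repQcore t r g v q).Realize w xs ↔
        S1I.RepQ E (w (Sum.inr 0)) (t.realize (Sum.elim w xs)) (r.realize (Sum.elim w xs))
          (g.realize (Sum.elim w xs)) (v.realize (Sum.elim w xs))
          (q.realize (Sum.elim w xs)) := by
    intros
    simp [S1I.repQcore, S1I.RepQ, S1I.flt, S1I.feq, S1I.vp, hRl, hRe, and_assoc]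
    simp only [Relations.boundedFormula₂, Relations.boundedFormula, BoundedFormula.Realize]
    simp [hRl, hRe]
  have hrealU : ∀ b : B,
      S1I.phiU.Realize (Sum.elim (fun _ => b) (fun _ => S1I.BB.pt) : Fin 1 ⊕ Fin 1 → B) ↔
        ∃ a, b = S1I.BB.base a := by
    intro b
    rw [← S1I.ltB_pt_iff E b]
    simp [S1I.phiU, Formula.Realize, hRl]
    simp only [Relations.boundedFormula₂, Relations.boundedFormula, BoundedFormula.Realize]
    simp [hRl]
  have hrealP : ∀ x y : A,
      S1I.phiP.Realize (Sum.elim ![S1I.BB.base x, S1I.BB.base y]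
        (fun _ => S1I.BB.pt) : Fin 2 ⊕ Fin 1 → B) ↔ E.cP x = E.cP y := by
    intro x y
    rw [S1I.phiP, BoundedFormula.realize_exs]
    simp only [BoundedFormula.realize_inf, hcoreP, S1I.vX, S1I.vY, S1I.vp, S1I.bv,
      Term.realize_var, Sum.elim_inl, Sum.elim_inr, Matrix.cons_val_zero,
      Matrix.cons_val_one, Matrix.head_cons, S1I.RepP_iff]
    constructor
    · rintro ⟨xs, ⟨h1, -, -, -⟩, h2, -, -, -⟩
      have h := h1.symm.trans h2
      simpa using h
    · intro h
      exact ⟨![.lamP (E.cP x), .ghP x, .rhoP (E.cP x), .qt, .ghP y, .rhoP (E.cP y), .qt],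
        ⟨rfl, rfl, rfl, rfl⟩, ⟨congrArg S1I.BB.lamP h, rfl, rfl, rfl⟩⟩
  have hrealQ : ∀ x y : A,
      S1I.phiQ.Realize (Sum.elim ![S1I.BB.base x, S1I.BB.base y]
        (fun _ => S1I.BB.pt) : Fin 2 ⊕ Fin 1 → B) ↔ E.cQ x = E.cQ y := by
    intro x y
    rw [S1I.phiQ, BoundedFormula.realize_exs]
    simp only [BoundedFormula.realize_inf, hcoreQ, S1I.vX, S1I.vY, S1I.vp, S1I.bv,
      Term.realize_var, Sum.elim_inl, Sum.elim_inr, Matrix.cons_val_zero,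
      Matrix.cons_val_one, Matrix.head_cons, S1I.RepQ_iff]
    constructor
    · rintro ⟨xs, ⟨h1, -, -, -⟩, h2, -, -, -⟩
      have h := h1.symm.trans h2
      simpa using h
    · intro h
      exact ⟨![.muQ (E.cQ x), .ghQ x, .nuQ (E.cQ x), .qt, .ghQ y, .nuQ (E.cQ y), .qt],
        ⟨rfl, rfl, rfl, rfl⟩, ⟨congrArg S1I.BB.muQ h, rfl, rfl, rfl⟩⟩
  have hrealnP : ∀ x y : A,
      S1I.phinP.Realize (Sum.elim ![S1I.BB.base x, S1I.BB.base y]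
        (fun _ => S1I.BB.pt) : Fin 2 ⊕ Fin 1 → B) ↔ ¬ E.cP x = E.cP y := by
    intro x y
    rw [S1I.phinP, BoundedFormula.realize_exs]
    simp only [BoundedFormula.realize_inf, BoundedFormula.realize_not,
      BoundedFormula.realize_bdEqual, hcoreP, S1I.vX, S1I.vY, S1I.vp, S1I.bv,
      Term.realize_var, Sum.elim_inl, Sum.elim_inr, Matrix.cons_val_zero,
      Matrix.cons_val_one, Matrix.head_cons, S1I.RepP_iff]
    constructor
    · rintro ⟨xs, ⟨⟨h1, -, -, -⟩, h2, -, -, -⟩, hne⟩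
      intro heq
      exact hne (by rw [h1, h2, heq])
    · intro h
      refine ⟨![.lamP (E.cP x), .lamP (E.cP y), .ghP x, .rhoP (E.cP x), .qt,
        .ghP y, .rhoP (E.cP y), .qt], ⟨⟨rfl, rfl, rfl, rfl⟩, rfl, rfl, rfl, rfl⟩, ?_⟩
      show ¬ S1I.BB.lamP (E.cP x) = S1I.BB.lamP (E.cP y)
      simpa using h
  have hrealnQ : ∀ x y : A,
      S1I.phinQ.Realize (Sum.elim ![S1I.BB.base x, S1I.BB.base y]
        (fun _ => S1I.BB.pt) : Fin 2 ⊕ Fin 1 → B) ↔ ¬ E.cQ x = E.cQ y := by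
    intro x y
    rw [S1I.phinQ, BoundedFormula.realize_exs]
    simp only [BoundedFormula.realize_inf, BoundedFormula.realize_not,
      BoundedFormula.realize_bdEqual, hcoreQ, S1I.vX, S1I.vY, S1I.vp, S1I.bv,
      Term.realize_var, Sum.elim_inl, Sum.elim_inr, Matrix.cons_val_zero,
      Matrix.cons_val_one, Matrix.head_cons, S1I.RepQ_iff]
    constructor
    · rintro ⟨xs, ⟨⟨h1, -, -, -⟩, h2, -, -, -⟩, hne⟩
      intro heq
      exact hne (by rw [h1, h2, heq])
    · intro h
      refine ⟨![.muQ (E.cQ x), .muQ (E.cQ y), .ghQ x, .nuQ (E.cQ x), .qt,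
        .ghQ y, .nuQ (E.cQ y), .qt], ⟨⟨rfl, rfl, rfl, rfl⟩, rfl, rfl, rfl, rfl⟩, ?_⟩
      show ¬ S1I.BB.muQ (E.cQ x) = S1I.BB.muQ (E.cQ y)
      simpa using h
  have hcPiff : ∀ x y : A, (E.cP x = E.cP y) ↔ SA.RelMap EqRel2.P ![x, y] :=
    fun x y => ⟨fun h => Quotient.exact h, fun h => Quotient.sound h⟩
  have hcQiff : ∀ x y : A, (E.cQ x = E.cQ y) ↔ SA.RelMap EqRel2.Q ![x, y] :=
    fun x y => ⟨fun h => Quotient.exact h, fun h => Quotient.sound h⟩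
  obtain ⟨a₀⟩ := hne
  refine ⟨⟨S1I.BB.base a₀, (hrealU _).mpr ⟨a₀, rfl⟩⟩, ?_, ?_⟩
  · -- condition (2)
    intro n R b hb
    cases R
    · obtain ⟨x, hx⟩ := (hrealU (b 0)).mp (hb 0)
      obtain ⟨y, hy⟩ := (hrealU (b 1)).mp (hb 1)
      have hbv : b = ![S1I.BB.base x, S1I.BB.base y] := by
        have : b = ![b 0, b 1] := by funext i; fin_cases i <;> rfl
        rw [this, hx, hy]
      rw [hbv]
      show S1I.phinP.Realize _ ↔ ¬ S1I.phiP.Realize _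
      rw [hrealnP x y, hrealP x y]
    · obtain ⟨x, hx⟩ := (hrealU (b 0)).mp (hb 0)
      obtain ⟨y, hy⟩ := (hrealU (b 1)).mp (hb 1)
      have hbv : b = ![S1I.BB.base x, S1I.BB.base y] := by
        have : b = ![b 0, b 1] := by funext i; fin_cases i <;> rfl
        rw [this, hx, hy]
      rw [hbv]
      show S1I.phinQ.Realize _ ↔ ¬ S1I.phiQ.Realize _
      rw [hrealnQ x y, hrealQ x y]
  · -- condition (3)
    refine ⟨(S1I.BB.base : A → B), fun a b h => by injection h, ?_, ?_⟩
    · intro b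
      rw [hrealU b]
      simp [Set.mem_range, eq_comm]
    · intro n R a
      cases R
      · have hv : (S1I.BB.base : A → B) ∘ a = ![S1I.BB.base (a 0), S1I.BB.base (a 1)] := by
          funext i; fin_cases i <;> rfl
        have ha : a = ![a 0, a 1] := by funext i; fin_cases i <;> rfl
        show SA.RelMap EqRel2.P a ↔ S1I.phiP.Realize _
        rw [hv, hrealP (a 0) (a 1), hcPiff]
        conv_lhs => rw [ha]
      · have hv : (S1I.BB.base : A → B) ∘ a = ![S1I.BB.base (a 0), S1I.BB.base (a 1)] := by
          funext i; fin_cases i <;> rfl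
        have ha : a = ![a 0, a 1] := by funext i; fin_cases i <;> rfl
        show SA.RelMap EqRel2.Q a ↔ S1I.phiQ.Realize _
        rw [hv, hrealQ (a 0) (a 1), hcQiff]
        conv_lhs => rw [ha]
end

section
/- The class 2Eq_fin of all finite nonempty models of two equivalences is Σ2-interpretable without parameters in the class LEq_fin of all finite nonempty models of a linear order and an equivalence. -/
open FirstOrder FirstOrder.Language

/-- A bounded formula is Π₁ if it consists of a (possibly empty) block of universal
quantifiers followed by a quantifier-free formula. -/
inductive IsPi1 {L : Language} {α : Type*} : {n : ℕ} → L.BoundedFormula α n → Prop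
  | of_isQF {n : ℕ} {φ : L.BoundedFormula α n} : φ.IsQF → IsPi1 φ
  | all {n : ℕ} {φ : L.BoundedFormula α (n + 1)} : IsPi1 φ → IsPi1 φ.all

/-- A bounded formula is Σ₂ if it has the form ∃x₁…∃xₘ ∀y₁…∀yₖ ψ with ψ quantifier-free. -/
inductive IsSigma2 {L : Language} {α : Type*} : {n : ℕ} → L.BoundedFormula α n → Prop
  | of_isPi1 {n : ℕ} {φ : L.BoundedFormula α n} : IsPi1 φ → IsSigma2 φ
  | ex {n : ℕ} {φ : L.BoundedFormula α (n + 1)} : IsSigma2 φ → IsSigma2 φ.ex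

/-- `K1` (a class of `σ1`-structures) is Σ₂-interpretable without parameters in `K2`
(a class of `σ2`-structures). -/
def Sigma2Interpretable (σ1 σ2 : Language)
    (K1 : (A : Type) → σ1.Structure A → Prop)
    (K2 : (B : Type) → σ2.Structure B → Prop) : Prop :=
  ∃ (ΦU : σ2.Formula (Fin 1))
    (ΦR ΦnR : (n : ℕ) → σ1.Relations n → σ2.Formula (Fin n)),
    IsSigma2 ΦU ∧
    (∀ (n : ℕ) (R : σ1.Relations n), IsSigma2 (ΦR n R)) ∧
    (∀ (n : ℕ) (R : σ1.Relations n), IsSigma2 (ΦnR n R)) ∧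
    ∀ (A : Type) (SA : σ1.Structure A), K1 A SA →
      ∃ (B : Type) (SB : σ2.Structure B),
        K2 B SB ∧
        (letI := SB
         -- (1) the interpreted universe B' = {b | 𝔅 ⊨ ΦU(b)} is nonempty
         (∃ b : B, ΦU.Realize (fun _ => b)) ∧
         -- (2) on B', the formula ΦnR defines exactly the complement of ΦR
         (∀ (n : ℕ) (R : σ1.Relations n) (b : Fin n → B),
            (∀ i, ΦU.Realize (fun _ => b i)) →
            ((ΦnR n R).Realize b ↔ ¬ (ΦR n R).Realize b)) ∧
         -- (3) 𝔄 is isomorphic to the structure induced on B' by the formulas ΦR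
         (∃ g : A → B,
            Function.Injective g ∧
            (∀ b : B, ΦU.Realize (fun _ => b) ↔ b ∈ Set.range g) ∧
            (∀ (n : ℕ) (R : σ1.Relations n) (a : Fin n → A),
              SA.RelMap R a ↔ (ΦR n R).Realize (g ∘ a))))

namespace Interp

open FirstOrder FirstOrder.Language

/-! ### The Σ₂ formulas -/

def bLt {k n : ℕ} (t₁ t₂ : σL.Term (Fin k ⊕ Fin n)) : σL.BoundedFormula (Fin k) n :=
  Relations.boundedFormula₂ (LERel.lt : σL.Relations 2) t₁ t₂

def bEqv {k n : ℕ} (t₁ t₂ : σL.Term (Fin k ⊕ Fin n)) : σL.BoundedFormula (Fin k) n :=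
  Relations.boundedFormula₂ (LERel.equiv : σL.Relations 2) t₁ t₂

def bBetw {k n : ℕ} (z x y : σL.Term (Fin k ⊕ Fin n)) : σL.BoundedFormula (Fin k) n :=
  (bLt x z ⊓ bLt z y) ⊔ (bLt y z ⊓ bLt z x)

def phiU : σL.Formula (Fin 1) :=
  (((bLt (&1) (&0)).not ⊓ (bEqv (Term.var (Sum.inl 0)) (&0)).not).all).ex

def phiP : σL.Formula (Fin 2) :=
  bEqv (Term.var (Sum.inl 0)) (Term.var (Sum.inl 1))

def phiQ : σL.Formula (Fin 2) :=
  ((((bLt (&1) (&0)).not ⊓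
      ((bBetw (&2) (Term.var (Sum.inl 0)) (Term.var (Sum.inl 1))).imp
        (bEqv (&2) (&0)).not)).all).all).ex

def phiNQ : σL.Formula (Fin 2) :=
  ((((bLt (&2) (&0)).not ⊓
      (bBetw (&1) (Term.var (Sum.inl 0)) (Term.var (Sum.inl 1)) ⊓ bEqv (&1) (&0))).all).ex).ex

lemma bLt_isQF {k n : ℕ} (t₁ t₂ : σL.Term (Fin k ⊕ Fin n)) : (bLt t₁ t₂).IsQF :=
  (BoundedFormula.IsAtomic.rel _ _).isQF

lemma bEqv_isQF {k n : ℕ} (t₁ t₂ : σL.Term (Fin k ⊕ Fin n)) : (bEqv t₁ t₂).IsQF :=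
  (BoundedFormula.IsAtomic.rel _ _).isQF

lemma bBetw_isQF {k n : ℕ} (z x y : σL.Term (Fin k ⊕ Fin n)) : (bBetw z x y).IsQF :=
  ((bLt_isQF _ _).inf (bLt_isQF _ _)).sup ((bLt_isQF _ _).inf (bLt_isQF _ _))

lemma phiU_isSigma2 : IsSigma2 phiU :=
  IsSigma2.ex (IsSigma2.of_isPi1 (IsPi1.all (IsPi1.of_isQF
    (((bLt_isQF _ _).not).inf ((bEqv_isQF _ _).not)))))

lemma phiP_isSigma2 : IsSigma2 phiP :=
  IsSigma2.of_isPi1 (IsPi1.of_isQF (bEqv_isQF _ _))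

lemma phiNP_isSigma2 : IsSigma2 phiP.not :=
  IsSigma2.of_isPi1 (IsPi1.of_isQF ((bEqv_isQF _ _).not))

lemma phiQ_isSigma2 : IsSigma2 phiQ :=
  IsSigma2.ex (IsSigma2.of_isPi1 (IsPi1.all (IsPi1.all (IsPi1.of_isQF
    (((bLt_isQF _ _).not).inf ((bBetw_isQF _ _ _).imp ((bEqv_isQF _ _).not)))))))

lemma phiNQ_isSigma2 : IsSigma2 phiNQ :=
  IsSigma2.ex (IsSigma2.ex (IsSigma2.of_isPi1 (IsPi1.all (IsPi1.of_isQF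
    (((bLt_isQF _ _).not).inf ((bBetw_isQF _ _ _).inf (bEqv_isQF _ _)))))))

/-! ### Realization lemmas -/

section Realize

variable {M : Type*} [σL.Structure M]

def sLt (x y : M) : Prop := Structure.RelMap (L := σL) LERel.lt ![x, y]
def sEqv (x y : M) : Prop := Structure.RelMap (L := σL) LERel.equiv ![x, y]

lemma realize_b2 {k n : ℕ} (R : LERel 2) (t₁ t₂ : σL.Term (Fin k ⊕ Fin n)) (v : Fin k → M)
    (xs : Fin n → M) : (Relations.boundedFormula₂ (L := σL) R t₁ t₂).Realize v xs ↔
      Structure.RelMap (L := σL) R ![t₁.realize (Sum.elim v xs), t₂.realize (Sum.elim v xs)] :=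
  BoundedFormula.realize_rel₂

lemma realize_phiU (v : Fin 1 → M) :
    phiU.Realize v ↔ ∃ m : M, ∀ w : M, ¬ sLt w m ∧ ¬ sEqv (v 0) m := by
  simp [phiU, bLt, bEqv, Formula.Realize, Fin.snoc, sLt, sEqv, realize_b2]

lemma realize_phiP (v : Fin 2 → M) :
    phiP.Realize v ↔ sEqv (v 0) (v 1) := by
  simp [phiP, bEqv, Formula.Realize, sEqv, realize_b2]

lemma realize_phiQ (v : Fin 2 → M) :
    phiQ.Realize v ↔ ∃ m : M, ∀ w z : M,
      ¬ sLt w m ∧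
      (((sLt (v 0) z ∧ sLt z (v 1)) ∨ (sLt (v 1) z ∧ sLt z (v 0))) → ¬ sEqv z m) := by
  simp [phiQ, bLt, bEqv, bBetw, Formula.Realize, Fin.snoc, sLt, sEqv, realize_b2]

lemma realize_phiNQ (v : Fin 2 → M) :
    phiNQ.Realize v ↔ ∃ m z : M, ∀ w : M,
      ¬ sLt w m ∧
      (((sLt (v 0) z ∧ sLt z (v 1)) ∨ (sLt (v 1) z ∧ sLt z (v 0))) ∧ sEqv z m) := by
  simp [phiNQ, bLt, bEqv, bBetw, Formula.Realize, Fin.snoc, sLt, sEqv, realize_b2]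

end Realize

/-! ### The model construction -/

section Construction

variable (A : Type) (s : Setoid A) (pA : A → A → Prop) (eA : A → ℕ) (eQ : Quotient s → ℕ)

def fB : A ⊕ Quotient s → ℕ ×ₗ ℕ
  | Sum.inl a => toLex (eQ (Quotient.mk s a), eA a + 1)
  | Sum.inr q => toLex (eQ q, 0)

def eqvB : A ⊕ Quotient s → A ⊕ Quotient s → Prop
  | Sum.inl a, Sum.inl a' => pA a a'
  | Sum.inr _, Sum.inr _ => True
  | _, _ => False

def SB : σL.Structure (A ⊕ Quotient s) where
  funMap := fun e _ => Empty.elim e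
  RelMap := fun r => match r with
    | LERel.lt => fun v => fB A s eA eQ (v 0) < fB A s eA eQ (v 1)
    | LERel.equiv => fun v => eqvB A s pA (v 0) (v 1)

lemma SB_lt (v : Fin 2 → A ⊕ Quotient s) :
    (SB A s pA eA eQ).RelMap LERel.lt v ↔ fB A s eA eQ (v 0) < fB A s eA eQ (v 1) :=
  Iff.rfl

lemma SB_eqv (v : Fin 2 → A ⊕ Quotient s) :
    (SB A s pA eA eQ).RelMap LERel.equiv v ↔ eqvB A s pA (v 0) (v 1) :=
  Iff.rfl

lemma sLt_SB (x y : A ⊕ Quotient s) :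
    (letI := SB A s pA eA eQ; sLt x y) ↔ fB A s eA eQ x < fB A s eA eQ y := by
  simp [sLt, SB_lt]

lemma sEqv_SB (x y : A ⊕ Quotient s) :
    (letI := SB A s pA eA eQ; sEqv x y) ↔ eqvB A s pA x y := by
  simp [sEqv, SB_eqv]

variable {A s eA eQ}

lemma fB_inj (heA : Function.Injective eA) (heQ : Function.Injective eQ) :
    Function.Injective (fB A s eA eQ) := by
  rintro (a | q) (a' | q') h <;> simp only [fB, toLex_inj, Prod.mk.injEq] at h
  · exact congrArg Sum.inl (heA (by omega))
  · omega
  · omega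
  · exact congrArg Sum.inr (heQ h.1)

lemma not_lt_min (q0 : Quotient s) (hq0 : ∀ q, eQ q0 ≤ eQ q) (w : A ⊕ Quotient s) :
    ¬ fB A s eA eQ w < fB A s eA eQ (Sum.inr q0) := by
  cases w with
  | inl a =>
      intro h
      simp only [fB, Prod.Lex.lt_iff, ofLex_toLex] at h
      have := hq0 (Quotient.mk s a)
      omega
  | inr q =>
      intro h
      simp only [fB, Prod.Lex.lt_iff, ofLex_toLex] at h
      have := hq0 q
      omega

lemma min_unique (heA : Function.Injective eA) (heQ : Function.Injective eQ)
    (q0 : Quotient s) (hq0 : ∀ q, eQ q0 ≤ eQ q) (m : A ⊕ Quotient s)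
    (hm : ∀ w, ¬ fB A s eA eQ w < fB A s eA eQ m) : m = Sum.inr q0 := by
  rcases lt_trichotomy (fB A s eA eQ m) (fB A s eA eQ (Sum.inr q0)) with h | h | h
  · exact absurd h (not_lt_min q0 hq0 m)
  · exact fB_inj heA heQ h
  · exact absurd h (hm _)

lemma eqvB_inr_iff (pA : A → A → Prop) (b : A ⊕ Quotient s) (q : Quotient s) :
    eqvB A s pA b (Sum.inr q) ↔ ∃ q', b = Sum.inr q' := by
  cases b <;> simp [eqvB]

/-- There is a marker strictly between `inl a` and `inl a'` iff they lie in different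
classes. -/
lemma markBetween_iff (heQ : Function.Injective eQ) (a a' : A) :
    (∃ q : Quotient s,
      (fB A s eA eQ (Sum.inl a) < fB A s eA eQ (Sum.inr q) ∧
        fB A s eA eQ (Sum.inr q) < fB A s eA eQ (Sum.inl a')) ∨
      (fB A s eA eQ (Sum.inl a') < fB A s eA eQ (Sum.inr q) ∧
        fB A s eA eQ (Sum.inr q) < fB A s eA eQ (Sum.inl a)))
    ↔ Quotient.mk s a ≠ Quotient.mk s a' := by
  constructor
  · rintro ⟨q, h⟩ heq
    simp only [fB, Prod.Lex.lt_iff, ofLex_toLex] at h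
    rw [heq] at h
    omega
  · intro hne
    have hne' : eQ (Quotient.mk s a) ≠ eQ (Quotient.mk s a') := fun h => hne (heQ h)
    rcases Nat.lt_or_ge (eQ (Quotient.mk s a)) (eQ (Quotient.mk s a')) with h | h
    · exact ⟨Quotient.mk s a', Or.inl ⟨by simp [fB, Prod.Lex.lt_iff, h],
        by simp [fB, Prod.Lex.lt_iff]⟩⟩
    · have h' : eQ (Quotient.mk s a') < eQ (Quotient.mk s a) := by omega
      exact ⟨Quotient.mk s a, Or.inr ⟨by simp [fB, Prod.Lex.lt_iff, h'],
        by simp [fB, Prod.Lex.lt_iff]⟩⟩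

end Construction

end Interp


/-- 2Eq_fin is Σ₂-interpretable without parameters in LEq_fin. -/
theorem twoEqFin_sigma2_interpretable_in_lEqFin :
    Sigma2Interpretable σE σL TwoEqFin LEqFin := by
  classical
  refine ⟨Interp.phiU,
    (fun n R => match R with | EqRel2.P => Interp.phiP | EqRel2.Q => Interp.phiQ),
    (fun n R => match R with | EqRel2.P => Interp.phiP.not | EqRel2.Q => Interp.phiNQ),
    Interp.phiU_isSigma2,
    (fun n R => match R with
      | EqRel2.P => Interp.phiP_isSigma2 | EqRel2.Q => Interp.phiQ_isSigma2),
    (fun n R => match R with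
      | EqRel2.P => Interp.phiNP_isSigma2 | EqRel2.Q => Interp.phiNQ_isSigma2),
    ?_⟩
  intro A SA hA
  obtain ⟨hAfin, hAne, hP, hQ⟩ := hA
  haveI : Finite A := hAfin
  let pA : A → A → Prop := fun x y => SA.RelMap EqRel2.P ![x, y]
  let s : Setoid A := ⟨fun x y => SA.RelMap EqRel2.Q ![x, y], hQ⟩
  haveI : Finite (Quotient s) := Quotient.finite s
  haveI : Nonempty (Quotient s) := Nonempty.map (Quotient.mk s) hAne
  obtain ⟨eA, heA⟩ := exists_injective_nat A
  obtain ⟨eQ, heQ⟩ := exists_injective_nat (Quotient s)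
  obtain ⟨q0, hq0⟩ := Finite.exists_min eQ
  -- characterization of the realization of phiU
  have hU : ∀ b : A ⊕ Quotient s,
      @Formula.Realize σL (A ⊕ Quotient s) (Interp.SB A s pA eA eQ) (Fin 1)
        Interp.phiU (fun _ => b) ↔ ∃ a, b = Sum.inl a := by
    intro b
    rw [@Interp.realize_phiU (A ⊕ Quotient s) (Interp.SB A s pA eA eQ) (fun _ => b)]
    simp only [Interp.sLt_SB, Interp.sEqv_SB]
    constructor
    · rintro ⟨m, hm⟩
      have hm0 : m = Sum.inr q0 :=
        Interp.min_unique heA heQ q0 hq0 m (fun w => (hm w).1)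
      subst hm0
      cases b with
      | inl a => exact ⟨a, rfl⟩
      | inr q => exact absurd (by simp [Interp.eqvB] : Interp.eqvB A s pA (Sum.inr q) (Sum.inr q0)) (hm (Sum.inr q0)).2
    · rintro ⟨a, rfl⟩
      exact ⟨Sum.inr q0, fun w =>
        ⟨Interp.not_lt_min q0 hq0 w, by simp [Interp.eqvB]⟩⟩
  -- characterization of the realization of phiQ
  have hQR : ∀ (v : Fin 2 → A ⊕ Quotient s) (a a' : A), v 0 = Sum.inl a →
      v 1 = Sum.inl a' →
      (@Formula.Realize σL (A ⊕ Quotient s) (Interp.SB A s pA eA eQ) (Fin 2)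
        Interp.phiQ v ↔ Quotient.mk s a = Quotient.mk s a') := by
    intro v a a' h0 h1
    rw [@Interp.realize_phiQ (A ⊕ Quotient s) (Interp.SB A s pA eA eQ) v]
    simp only [Interp.sLt_SB, Interp.sEqv_SB, h0, h1]
    constructor
    · rintro ⟨m, hm⟩
      have hm0 : m = Sum.inr q0 :=
        Interp.min_unique heA heQ q0 hq0 m (fun w => (hm w w).1)
      subst hm0
      by_contra hne
      obtain ⟨q, hq⟩ := (Interp.markBetween_iff heQ a a').2 hne
      exact (hm (Sum.inr q0) (Sum.inr q)).2 hq (by simp [Interp.eqvB])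
    · intro heq
      refine ⟨Sum.inr q0, fun w z =>
        ⟨Interp.not_lt_min q0 hq0 w, fun hbet hez => ?_⟩⟩
      obtain ⟨q', rfl⟩ := (Interp.eqvB_inr_iff pA z q0).1 hez
      exact ((Interp.markBetween_iff heQ a a').1 ⟨q', hbet⟩) heq
  -- characterization of the realization of phiNQ
  have hNQR : ∀ (v : Fin 2 → A ⊕ Quotient s) (a a' : A), v 0 = Sum.inl a →
      v 1 = Sum.inl a' →
      (@Formula.Realize σL (A ⊕ Quotient s) (Interp.SB A s pA eA eQ) (Fin 2)
        Interp.phiNQ v ↔ ¬ Quotient.mk s a = Quotient.mk s a') := by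
    intro v a a' h0 h1
    rw [@Interp.realize_phiNQ (A ⊕ Quotient s) (Interp.SB A s pA eA eQ) v]
    simp only [Interp.sLt_SB, Interp.sEqv_SB, h0, h1]
    constructor
    · rintro ⟨m, z, hm⟩
      have hm0 : m = Sum.inr q0 :=
        Interp.min_unique heA heQ q0 hq0 m (fun w => (hm w).1)
      subst hm0
      obtain ⟨hbet, hez⟩ := (hm (Sum.inr q0)).2
      obtain ⟨q', rfl⟩ := (Interp.eqvB_inr_iff pA z q0).1 hez
      exact (Interp.markBetween_iff heQ a a').1 ⟨q', hbet⟩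
    · intro hne
      obtain ⟨q, hq⟩ := (Interp.markBetween_iff heQ a a').2 hne
      exact ⟨Sum.inr q0, Sum.inr q, fun w =>
        ⟨Interp.not_lt_min q0 hq0 w, hq, by simp [Interp.eqvB]⟩⟩
  refine ⟨A ⊕ Quotient s, Interp.SB A s pA eA eQ, ?_, ?_, ?_, ?_⟩
  · -- LEqFin
    refine ⟨inferInstance, ⟨Sum.inl hAne.some⟩, ?_, ?_, ?_, ?_, ?_, ?_⟩
    · intro x
      simp only [Interp.SB_lt, Matrix.cons_val_zero, Matrix.cons_val_one, Matrix.head_cons]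
      exact lt_irrefl _
    · intro x y z
      simp only [Interp.SB_lt, Matrix.cons_val_zero, Matrix.cons_val_one, Matrix.head_cons]
      exact lt_trans
    · intro x y
      simp only [Interp.SB_lt, Matrix.cons_val_zero, Matrix.cons_val_one, Matrix.head_cons]
      rcases lt_trichotomy (Interp.fB A s eA eQ x) (Interp.fB A s eA eQ y) with h | h | h
      · exact Or.inl h
      · exact Or.inr (Or.inl (Interp.fB_inj heA heQ h))
      · exact Or.inr (Or.inr h)
    · intro x
      simp only [Interp.SB_eqv, Matrix.cons_val_zero, Matrix.cons_val_one, Matrix.head_cons]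
      cases x with
      | inl a => exact hP.refl a
      | inr q => trivial
    · intro x y h
      simp only [Interp.SB_eqv, Matrix.cons_val_zero, Matrix.cons_val_one,
        Matrix.head_cons] at h ⊢
      cases x <;> cases y <;> simp [Interp.eqvB] at h ⊢
      exact hP.symm h
    · intro x y z h1 h2
      simp only [Interp.SB_eqv, Matrix.cons_val_zero, Matrix.cons_val_one,
        Matrix.head_cons] at h1 h2 ⊢
      cases x <;> cases y <;> cases z <;> simp [Interp.eqvB] at h1 h2 ⊢
      exact hP.trans h1 h2
  · -- nonemptiness of B'
    exact ⟨Sum.inl hAne.some, (hU _).2 ⟨_, rfl⟩⟩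
  · -- complements
    intro n R b hb
    cases R with
    | P =>
        exact @Formula.realize_not σL (A ⊕ Quotient s) (Interp.SB A s pA eA eQ)
          (Fin 2) Interp.phiP b
    | Q =>
        obtain ⟨a0, h0⟩ := (hU (b 0)).1 (hb 0)
        obtain ⟨a1, h1⟩ := (hU (b 1)).1 (hb 1)
        exact (hNQR b a0 a1 h0 h1).trans (not_congr (hQR b a0 a1 h0 h1)).symm
  · -- the isomorphism
    refine ⟨Sum.inl, Sum.inl_injective, ?_, ?_⟩
    · intro b
      rw [hU b]
      constructor
      · rintro ⟨a, rfl⟩; exact ⟨a, rfl⟩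
      · rintro ⟨a, rfl⟩; exact ⟨a, rfl⟩
    · intro n R a
      cases R with
      | P =>
          have ha : a = ![a 0, a 1] := by funext i; fin_cases i <;> rfl
          have h2 : @Formula.Realize σL (A ⊕ Quotient s) (Interp.SB A s pA eA eQ) (Fin 2)
              Interp.phiP (Sum.inl ∘ a) ↔ Interp.eqvB A s pA (Sum.inl (a 0)) (Sum.inl (a 1)) := by
            rw [@Interp.realize_phiP (A ⊕ Quotient s) (Interp.SB A s pA eA eQ) (Sum.inl ∘ a),
              Interp.sEqv_SB]
            simp [Function.comp]
          refine Iff.trans ?_ h2.symm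
          constructor
          · intro h
            show pA (a 0) (a 1)
            show SA.RelMap EqRel2.P ![a 0, a 1]
            rw [← ha]; exact h
          · intro h
            have h3 : SA.RelMap EqRel2.P ![a 0, a 1] := h
            rw [ha]; exact h3
      | Q =>
          refine Iff.trans ?_ (hQR (Sum.inl ∘ a) (a 0) (a 1) rfl rfl).symm
          have ha : a = ![a 0, a 1] := by funext i; fin_cases i <;> rfl
          constructor
          · intro h
            apply Quotient.sound
            show SA.RelMap EqRel2.Q ![a 0, a 1]
            rw [← ha]; exact h
          · intro h
            have h3 : SA.RelMap EqRel2.Q ![a 0, a 1] := Quotient.exact h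
            rw [ha]; exact h3
end
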